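/- arXiv:1109.4328 — 12 statements merged into one kernel-verified Lean document; each statement's English description precedes it below -/
import Mathlib

section
/- Let a : ℕ → ℕ → ℝ be a double sequence with a k ℓ ≠ 0 for all k, ℓ. Suppose for each fixed k the series Σ_ℓ |a k ℓ| converges and for each fixed ℓ the series Σ_k |a k ℓ| converges, and suppose the ratios |a k (ℓ+1)| / |a k ℓ| tend to a limit L as (k,ℓ) → ∞ along the product filter atTop ×ˢ atTop, with L < 1. Then the function (k,ℓ) ↦ |a k ℓ| is summable over ℕ × ℕ (the double series is absolutely convergent). -/
open Filter

set_option maxHeartbeats 1000000 in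
/-- Ratio test for absolute convergence of double series. -/
theorem double_series_ratio_test (a : ℕ → ℕ → ℝ)
    (hne : ∀ k ℓ : ℕ, a k ℓ ≠ 0)
    (hrow : ∀ k : ℕ, Summable fun ℓ : ℕ => |a k ℓ|)
    (hcol : ∀ ℓ : ℕ, Summable fun k : ℕ => |a k ℓ|)
    (L : ℝ) (hL : L < 1)
    (hlim : Tendsto (fun p : ℕ × ℕ => |a p.1 (p.2 + 1)| / |a p.1 p.2|)
      (atTop ×ˢ atTop) (nhds L)) :
    Summable fun p : ℕ × ℕ => |a p.1 p.2| := by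
  set r : ℝ := (max L 0 + 1) / 2 with hrdef
  have hm1 : max L 0 < 1 := max_lt hL one_pos
  have hr0 : 0 < r := by
    have : (0:ℝ) ≤ max L 0 := le_max_right _ _
    rw [hrdef]; linarith
  have hr1 : r < 1 := by rw [hrdef]; linarith
  have hLr : L < r := by
    have h1 : L ≤ max L 0 := le_max_left _ _
    rw [hrdef]; linarith
  have hev : ∀ᶠ p : ℕ × ℕ in atTop ×ˢ atTop,
      |a p.1 (p.2 + 1)| / |a p.1 p.2| < r := hlim.eventually_lt_const hLr
  rw [prod_atTop_atTop_eq, eventually_atTop] at hev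
  obtain ⟨⟨K, N⟩, hKN⟩ := hev
  have hpos : ∀ k ℓ, 0 < |a k ℓ| := fun k ℓ => abs_pos.mpr (hne k ℓ)
  have hkey : ∀ k, K ≤ k → ∀ ℓ, N ≤ ℓ → |a k (ℓ + 1)| ≤ r * |a k ℓ| := by
    intro k hk ℓ hℓ
    have h := hKN (k, ℓ) ⟨hk, hℓ⟩
    have := (div_lt_iff₀ (hpos k ℓ)).mp h
    linarith [this, mul_comm r |a k ℓ|]
  have hpow : ∀ k, K ≤ k → ∀ m : ℕ, |a k (m + N)| ≤ r ^ m * |a k N| := by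
    intro k hk m
    induction m with
    | zero => simp
    | succ n ih =>
        have h1 : |a k (n + N + 1)| ≤ r * |a k (n + N)| :=
          hkey k hk (n + N) (Nat.le_add_left _ _)
        calc |a k (n + 1 + N)| = |a k (n + N + 1)| := by ring_nf
          _ ≤ r * |a k (n + N)| := h1
          _ ≤ r * (r ^ n * |a k N|) := by
              exact mul_le_mul_of_nonneg_left ih hr0.le
          _ = r ^ (n + 1) * |a k N| := by ring
  rw [summable_prod_of_nonneg (fun p => abs_nonneg _)]
  refine ⟨fun k => hrow k, ?_⟩
  rw [← summable_nat_add_iff K]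
  have hbound : ∀ n : ℕ, (∑' ℓ, |a (n + K) ℓ|) ≤
      (∑ ℓ ∈ Finset.range N, |a (n + K) ℓ|) + (1 - r)⁻¹ * |a (n + K) N| := by
    intro n
    have hks : K ≤ n + K := Nat.le_add_left _ _
    have hs1 : Summable fun m : ℕ => |a (n + K) (m + N)| :=
      (summable_nat_add_iff N).mpr (hrow (n + K))
    have hs2 : Summable fun m : ℕ => r ^ m * |a (n + K) N| :=
      (summable_geometric_of_lt_one hr0.le hr1).mul_right _
    have htail : (∑' m, |a (n + K) (m + N)|) ≤ (1 - r)⁻¹ * |a (n + K) N| := by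
      calc (∑' m, |a (n + K) (m + N)|) ≤ ∑' m, r ^ m * |a (n + K) N| :=
            Summable.tsum_le_tsum (fun m => hpow (n + K) hks m) hs1 hs2
        _ = (∑' m, r ^ m) * |a (n + K) N| := tsum_mul_right
        _ = (1 - r)⁻¹ * |a (n + K) N| := by
            rw [tsum_geometric_of_lt_one hr0.le hr1]
    have hsplit := Summable.sum_add_tsum_nat_add N (hrow (n + K))
    linarith [hsplit, htail]
  have hg1 : Summable fun n : ℕ => ∑ ℓ ∈ Finset.range N, |a (n + K) ℓ| :=
    summable_sum fun ℓ _ => (summable_nat_add_iff K).mpr (hcol ℓ)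
  have hg2 : Summable fun n : ℕ => (1 - r)⁻¹ * |a (n + K) N| :=
    ((summable_nat_add_iff K).mpr (hcol N)).mul_left _
  exact Summable.of_nonneg_of_le (fun n => tsum_nonneg fun ℓ => abs_nonneg _)
    hbound (hg1.add hg2)
end

section
/- Let a : ℕ → ℕ → ℝ be a double sequence with a k ℓ ≠ 0 for all k, ℓ. Suppose the ratios |a k (ℓ+1)| / |a k ℓ| tend to a limit L as (k,ℓ) → ∞ along the product filter atTop ×ˢ atTop, with L > 1 (L may be +∞). Then the double series of a diverges in Pringsheim's sense: there is no real number S such that the rectangular partial sums S_{m,n} = Σ_{k=0}^{m} Σ_{ℓ=0}^{n} a k ℓ tend to S as (m,n) → ∞ along the product filter atTop ×ˢ atTop. -/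
open Filter Topology Finset

/-!
If the rectangular sums converge, inclusion–exclusion over four rectangles shows that the terms
tend to `0`, so `|a k ℓ| < 1` on some quadrant. On a quadrant the ratios also exceed some `r > 1`,
so along a single row `k` the nonzero terms grow at least like `r ^ ℓ`: a contradiction.
-/

theorem tendsto_norm_atTop_of_ratio_norm_eventually_ge {E : Type*} [SeminormedAddCommGroup E]
    {f : ℕ → E} {r : ℝ} (hr : 1 < r) (hf : ∃ᶠ n in atTop, ‖f n‖ ≠ 0)
    (h : ∀ᶠ n in atTop, r * ‖f n‖ ≤ ‖f (n + 1)‖) :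
    Tendsto (fun n ↦ ‖f n‖) atTop atTop := by
  obtain ⟨N₀, hN₀⟩ := eventually_atTop.mp h
  obtain ⟨N, hN, hfN⟩ := frequently_atTop.mp hf N₀
  refine (tendsto_add_atTop_iff_nat N).mp (tendsto_atTop_of_geom_le ?_ hr fun n ↦ ?_)
  · simpa using (norm_nonneg _).lt_of_ne' hfN
  · simpa [Nat.add_right_comm n 1 N] using hN₀ (n + N) (by omega)

theorem map_succ_prod_atTop_atTop :
    map (Prod.map (· + 1) (· + 1)) (atTop ×ˢ atTop : Filter (ℕ × ℕ)) = atTop ×ˢ atTop := by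
  rw [← prod_map_map_eq', map_add_atTop_eq_nat]

theorem tendsto_zero_of_tendsto_rectangular_sum {G : Type*} [AddCommGroup G] [TopologicalSpace G]
    [IsTopologicalAddGroup G] {a : ℕ → ℕ → G} {S : G}
    (hS : Tendsto (fun p : ℕ × ℕ ↦ ∑ k ∈ range (p.1 + 1), ∑ ℓ ∈ range (p.2 + 1), a k ℓ)
      (atTop ×ˢ atTop) (𝓝 S)) :
    Tendsto (fun p : ℕ × ℕ ↦ a p.1 p.2) (atTop ×ˢ atTop) (𝓝 0) := by
  set s := fun p : ℕ × ℕ ↦ ∑ k ∈ range (p.1 + 1), ∑ ℓ ∈ range (p.2 + 1), a k ℓ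
  have shift (i j : ℕ) : Tendsto (fun p : ℕ × ℕ ↦ s (p.1 + i, p.2 + j)) (atTop ×ˢ atTop) (𝓝 S) :=
    hS.comp ((tendsto_add_atTop_nat i).prodMap (tendsto_add_atTop_nat j))
  rw [← map_succ_prod_atTop_atTop, tendsto_map'_iff]
  -- inclusion–exclusion over the rectangles with corners `(m, n)` and `(m + 1, n + 1)`
  have key := (((shift 1 1).sub (shift 0 1)).sub (shift 1 0)).add (shift 0 0)
  rw [sub_self, zero_sub, neg_add_cancel] at key
  refine key.congr fun p ↦ ?_
  simp only [s, add_zero, sum_range_succ, sum_add_distrib]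
  abel

/-- Ratio test: divergence in Pringsheim's sense when the ratio limit exceeds 1
(possibly `+∞`, hence the limit is taken in `EReal`). -/
theorem double_series_ratio_test_divergent (a : ℕ → ℕ → ℝ)
    (hne : ∀ k ℓ : ℕ, a k ℓ ≠ 0)
    (L : EReal) (hL : 1 < L)
    (hlim : Tendsto (fun p : ℕ × ℕ => ((|a p.1 (p.2 + 1)| / |a p.1 p.2| : ℝ) : EReal))
      (atTop ×ˢ atTop) (nhds L)) :
    ¬ ∃ S : ℝ, Tendsto
      (fun p : ℕ × ℕ => ∑ k ∈ Finset.range (p.1 + 1), ∑ ℓ ∈ Finset.range (p.2 + 1), a k ℓ)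
      (atTop ×ˢ atTop) (nhds S) := by
  rintro ⟨S, hS⟩
  obtain ⟨r, hr1, hrL⟩ := EReal.lt_iff_exists_real_btwn.mp hL
  have hratio : ∀ᶠ p : ℕ × ℕ in atTop ×ˢ atTop, r * |a p.1 p.2| ≤ |a p.1 (p.2 + 1)| := by
    filter_upwards [hlim.eventually_const_lt hrL] with p hp
    exact (le_div_iff₀ (abs_pos.mpr (hne _ _))).mp (EReal.coe_lt_coe_iff.mp hp).le
  have hsmall : ∀ᶠ p : ℕ × ℕ in atTop ×ˢ atTop, |a p.1 p.2| < 1 := by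
    have := (tendsto_zero_of_tendsto_rectangular_sum hS).abs
    rw [abs_zero] at this
    exact this.eventually_lt_const one_pos
  obtain ⟨k, hk⟩ := (hratio.and hsmall).curry.exists
  have hgrow : Tendsto (fun ℓ ↦ ‖a k ℓ‖) atTop atTop :=
    tendsto_norm_atTop_of_ratio_norm_eventually_ge (EReal.coe_lt_coe_iff.mp hr1)
      (.of_forall fun ℓ ↦ norm_ne_zero_iff.mpr (hne k ℓ)) (hk.mono fun _ h ↦ h.1)
  obtain ⟨ℓ, hbig, hℓ⟩ := ((hgrow.eventually_ge_atTop 1).and hk).exists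
  exact (Real.norm_eq_abs _ ▸ hbig).not_gt hℓ.2
end

section
/- Let a : ℕ → ℕ → ℝ and b : ℕ → ℕ → ℝ be double sequences with b k ℓ > 0 for all k, ℓ. Suppose for each fixed k the series Σ_ℓ |a k ℓ| converges and for each fixed ℓ the series Σ_k |a k ℓ| converges; suppose there exists N ∈ ℕ such that for all k ≥ N and ℓ ≥ N one has |a k (ℓ+1)| · b k ℓ ≤ |a k ℓ| · b k (ℓ+1) and |a (k+1) ℓ| · b k ℓ ≤ |a k ℓ| · b (k+1) ℓ; and suppose (k,ℓ) ↦ b k ℓ is summable over ℕ × ℕ. Then (k,ℓ) ↦ |a k ℓ| is summable over ℕ × ℕ. -/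
/-- Ratio-comparison test for absolute convergence of double series. -/
theorem double_series_ratio_comparison_test (a b : ℕ → ℕ → ℝ)
    (hb : ∀ k ℓ : ℕ, 0 < b k ℓ)
    (hrow : ∀ k : ℕ, Summable fun ℓ : ℕ => |a k ℓ|)
    (hcol : ∀ ℓ : ℕ, Summable fun k : ℕ => |a k ℓ|)
    (hratio : ∃ N : ℕ, ∀ k ≥ N, ∀ ℓ ≥ N,
      |a k (ℓ + 1)| * b k ℓ ≤ |a k ℓ| * b k (ℓ + 1) ∧
      |a (k + 1) ℓ| * b k ℓ ≤ |a k ℓ| * b (k + 1) ℓ)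
    (hbs : Summable fun p : ℕ × ℕ => b p.1 p.2) :
    Summable fun p : ℕ × ℕ => |a p.1 p.2| := by
  obtain ⟨N, hN⟩ := hratio
  set C := |a N N| / b N N with hC
  have hC0 : 0 ≤ C := div_nonneg (abs_nonneg _) (hb N N).le
  -- monotonicity along rows
  have hrowmono : ∀ k, N ≤ k → ∀ ℓ, N ≤ ℓ → |a k ℓ| * b k N ≤ |a k N| * b k ℓ := by
    intro k hk ℓ hℓ
    induction ℓ, hℓ using Nat.le_induction with
    | base => exact le_refl _
    | succ ℓ hℓ IH =>
      have h1 := (hN k hk ℓ hℓ).1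
      have h3 : |a k (ℓ+1)| * b k N * b k ℓ ≤ |a k N| * b k (ℓ+1) * b k ℓ := by
        nlinarith [mul_le_mul_of_nonneg_right h1 (hb k N).le,
          mul_le_mul_of_nonneg_right IH (hb k (ℓ+1)).le]
      exact le_of_mul_le_mul_right h3 (hb k ℓ)
  -- monotonicity along the first column
  have hcolmono : ∀ k, N ≤ k → |a k N| * b N N ≤ |a N N| * b k N := by
    intro k hk
    induction k, hk using Nat.le_induction with
    | base => exact le_refl _
    | succ k hk IH =>
      have h1 := (hN k hk N le_rfl).2
      have h3 : |a (k+1) N| * b N N * b k N ≤ |a N N| * b (k+1) N * b k N := by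
        nlinarith [mul_le_mul_of_nonneg_right h1 (hb N N).le,
          mul_le_mul_of_nonneg_right IH (hb (k+1) N).le]
      exact le_of_mul_le_mul_right h3 (hb k N)
  have hmain : ∀ k, N ≤ k → ∀ ℓ, N ≤ ℓ → |a k ℓ| ≤ C * b k ℓ := by
    intro k hk ℓ hℓ
    have h1 := hrowmono k hk ℓ hℓ
    have h2 := hcolmono k hk
    have h3 : |a k ℓ| * b N N * b k N ≤ |a N N| * b k ℓ * b k N := by
      nlinarith [mul_le_mul_of_nonneg_right h1 (hb N N).le,
        mul_le_mul_of_nonneg_right h2 (hb k ℓ).le]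
    have h4 := le_of_mul_le_mul_right h3 (hb k N)
    rw [hC, div_mul_eq_mul_div, le_div_iff₀ (hb N N)]
    linarith
  -- three comparison pieces
  set g1 : ℕ × ℕ → ℝ := fun p => if p.1 < N then |a p.1 p.2| else 0 with hg1
  set g2 : ℕ × ℕ → ℝ := fun p => if p.2 < N then |a p.1 p.2| else 0 with hg2
  have Sg1 : Summable g1 := by
    rw [hg1, summable_prod_of_nonneg (by intro p; dsimp; positivity)]
    constructor
    · intro k
      by_cases h : k < N
      · simpa [h] using hrow k
      · simp only [if_neg h]
        exact summable_zero
    · apply summable_of_ne_finset_zero (s := Finset.range N)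
      intro k hk
      have h : ¬ k < N := by simpa using hk
      simp [h]
  have Sg2 : Summable g2 := by
    rw [hg2, summable_prod_of_nonneg (by intro p; dsimp; positivity)]
    constructor
    · intro k
      apply summable_of_ne_finset_zero (s := Finset.range N)
      intro ℓ hℓ
      have h : ¬ ℓ < N := by simpa using hℓ
      simp [h]
    · have heq : ∀ k : ℕ, (∑' ℓ : ℕ, (if ℓ < N then |a k ℓ| else 0))
          = ∑ ℓ ∈ Finset.range N, |a k ℓ| := by
        intro k
        rw [tsum_eq_sum (s := Finset.range N) ?_]
        swap
        · intro ℓ hℓ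
          have h : ¬ ℓ < N := by simpa using hℓ
          simp [h]
        refine Finset.sum_congr rfl ?_
        intro ℓ hℓ
        have h : ℓ < N := by simpa using hℓ
        simp [h]
      simp only [heq]
      exact summable_sum fun ℓ _ => hcol ℓ
  have Sg3 : Summable fun p : ℕ × ℕ => C * b p.1 p.2 := hbs.mul_left C
  refine Summable.of_nonneg_of_le (fun p => abs_nonneg _) (fun p => ?_)
    ((Sg1.add Sg2).add Sg3)
  by_cases h1 : p.1 < N
  · have : g1 p = |a p.1 p.2| := by simp [hg1, h1]
    have hp2 : 0 ≤ g2 p := by rw [hg2]; dsimp; positivity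
    nlinarith [mul_nonneg hC0 (hb p.1 p.2).le]
  · by_cases h2 : p.2 < N
    · have : g2 p = |a p.1 p.2| := by simp [hg2, h2]
      have hp1 : 0 ≤ g1 p := by rw [hg1]; dsimp; positivity
      nlinarith [mul_nonneg hC0 (hb p.1 p.2).le]
    · have := hmain p.1 (le_of_not_gt h1) p.2 (le_of_not_gt h2)
      have hp1 : 0 ≤ g1 p := by rw [hg1]; dsimp; positivity
      have hp2 : 0 ≤ g2 p := by rw [hg2]; dsimp; positivity
      linarith
end

section
/- Let a : ℕ → ℕ → ℝ and b : ℕ → ℕ → ℝ be double sequences with b k ℓ > 0 for all k, ℓ. Suppose there exists L₀ ∈ ℕ such that for all ℓ ≥ L₀ and all k ∈ ℕ one has |a k (ℓ+1)| · b k ℓ ≥ |a k ℓ| · b k (ℓ+1) > 0, and there exists K₀ ∈ ℕ such that for all k ≥ K₀ and all ℓ ∈ ℕ one has |a (k+1) ℓ| · b k ℓ ≥ |a k ℓ| · b (k+1) ℓ > 0. If (k,ℓ) ↦ b k ℓ is not summable over ℕ × ℕ, then (k,ℓ) ↦ |a k ℓ| is not summable over ℕ × ℕ. -/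
/-- Ratio-comparison test: divergence part. -/
theorem double_series_ratio_comparison_test_divergent (a b : ℕ → ℕ → ℝ)
    (hb : ∀ k ℓ : ℕ, 0 < b k ℓ)
    (h1 : ∃ L₀ : ℕ, ∀ ℓ ≥ L₀, ∀ k : ℕ,
      |a k (ℓ + 1)| * b k ℓ ≥ |a k ℓ| * b k (ℓ + 1) ∧ 0 < |a k ℓ| * b k (ℓ + 1))
    (h2 : ∃ K₀ : ℕ, ∀ k ≥ K₀, ∀ ℓ : ℕ,
      |a (k + 1) ℓ| * b k ℓ ≥ |a k ℓ| * b (k + 1) ℓ ∧ 0 < |a k ℓ| * b (k + 1) ℓ)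
    (hbns : ¬ Summable fun p : ℕ × ℕ => b p.1 p.2) :
    ¬ Summable fun p : ℕ × ℕ => |a p.1 p.2| := by
  obtain ⟨L₀, h1⟩ := h1
  obtain ⟨K₀, h2⟩ := h2
  intro hsa
  apply hbns
  set r : ℕ → ℕ → ℝ := fun k ℓ => |a k ℓ| / b k ℓ with hr
  -- monotonicity in ℓ
  have hstep1 : ∀ k ℓ, L₀ ≤ ℓ → r k ℓ ≤ r k (ℓ + 1) := by
    intro k ℓ hℓ
    have h := (h1 ℓ hℓ k).1
    rw [hr]
    rw [div_le_div_iff₀ (hb k ℓ) (hb k (ℓ + 1))]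
    linarith
  have hmono1 : ∀ k ℓ, L₀ ≤ ℓ → r k L₀ ≤ r k ℓ := by
    intro k ℓ hℓ
    induction ℓ, hℓ using Nat.le_induction with
    | base => exact le_rfl
    | succ n hn ih => exact ih.trans (hstep1 k n hn)
  -- monotonicity in k
  have hstep2 : ∀ ℓ k, K₀ ≤ k → r k ℓ ≤ r (k + 1) ℓ := by
    intro ℓ k hk
    have h := (h2 k hk ℓ).1
    rw [hr]
    rw [div_le_div_iff₀ (hb k ℓ) (hb (k + 1) ℓ)]
    linarith
  have hmono2 : ∀ ℓ k, K₀ ≤ k → r K₀ ℓ ≤ r k ℓ := by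
    intro ℓ k hk
    induction k, hk using Nat.le_induction with
    | base => exact le_rfl
    | succ n hn ih => exact ih.trans (hstep2 ℓ n hn)
  -- positivity of base ratios
  have hpos1 : ∀ k, 0 < r k L₀ := by
    intro k
    have h := (h1 L₀ le_rfl k).2
    have hb' := hb k (L₀ + 1)
    have ha : 0 < |a k L₀| := by nlinarith [abs_nonneg (a k L₀)]
    exact div_pos ha (hb k L₀)
  have hpos2 : ∀ ℓ, 0 < r K₀ ℓ := by
    intro ℓ
    have h := (h2 K₀ le_rfl ℓ).2
    have hb' := hb (K₀ + 1) ℓ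
    have ha : 0 < |a K₀ ℓ| := by nlinarith [abs_nonneg (a K₀ ℓ)]
    exact div_pos ha (hb K₀ ℓ)
  -- uniform constant
  set c : ℝ := min ((Finset.range (L₀ + 1)).inf' Finset.nonempty_range_add_one (fun ℓ => r K₀ ℓ))
      ((Finset.range (K₀ + 1)).inf' Finset.nonempty_range_add_one (fun k => r k L₀)) with hc
  have hcpos : 0 < c := by
    rw [hc, lt_min_iff]
    constructor <;> rw [Finset.lt_inf'_iff] <;> intro i _
    · exact hpos2 i
    · exact hpos1 i
  have hkey : ∀ k ℓ, K₀ ≤ k ∨ L₀ ≤ ℓ → c ≤ r k ℓ := by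
    intro k ℓ h
    rcases le_or_gt K₀ k with hk | hk
    · refine le_trans ?_ (hmono2 ℓ k hk)
      rcases le_or_gt ℓ L₀ with h' | h'
      · exact le_trans (min_le_left _ _)
          (Finset.inf'_le _ (Finset.mem_range.mpr (Nat.lt_succ_of_le h')))
      · refine le_trans (le_trans (min_le_left _ _)
          (Finset.inf'_le _ (Finset.mem_range.mpr (Nat.lt_succ_self L₀)))) ?_
        exact hmono1 K₀ ℓ h'.le
    · have hℓ : L₀ ≤ ℓ := by omega
      refine le_trans ?_ (hmono1 k ℓ hℓ)
      exact le_trans (min_le_right _ _)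
        (Finset.inf'_le _ (Finset.mem_range.mpr (Nat.lt_succ_of_le hk.le)))
  have hb_le : ∀ p : ℕ × ℕ, K₀ ≤ p.1 ∨ L₀ ≤ p.2 → b p.1 p.2 ≤ c⁻¹ * |a p.1 p.2| := by
    intro p hp
    have h := hkey p.1 p.2 hp
    rw [hr, le_div_iff₀ (hb p.1 p.2)] at h
    calc b p.1 p.2 = c⁻¹ * (c * b p.1 p.2) := by field_simp
    _ ≤ c⁻¹ * |a p.1 p.2| := by
        exact mul_le_mul_of_nonneg_left h (inv_nonneg.mpr hcpos.le)
  -- conclude summability of b from summability of |a|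
  set s : Finset (ℕ × ℕ) := Finset.range K₀ ×ˢ Finset.range L₀ with hs
  rw [← s.summable_compl_iff]
  have hg : Summable (fun p : {x // x ∉ s} => c⁻¹ * |a p.1.1 p.1.2|) :=
    s.summable_compl_iff.2 (hsa.mul_left c⁻¹)
  refine Summable.of_nonneg_of_le (fun p => (hb p.1.1 p.1.2).le) ?_ hg
  intro p
  have hp : K₀ ≤ p.1.1 ∨ L₀ ≤ p.1.2 := by
    have := p.2
    simp only [hs, Finset.mem_product, Finset.mem_range] at this
    omega
  exact hb_le p.1 hp
end

section
/- For every real ω > 0, every real γ > 0, and all m, n ∈ ℕ, the matrix-element resolution-of-identity formula for the γ-deformed coherent states holds: (1/π) ∫_{z ∈ ℂ} z^m · (conj z)^n · |z|^{2(γ−1)} / (Γ(γ) · ω^γ) · exp(−|z|²/ω) dA(z) = ωⁿ · Γ(γ + n)/Γ(γ) if m = n, and = 0 if m ≠ n, where dA is Lebesgue measure (volume) on ℂ. -/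
/-!
In polar coordinates `z = r e^{iθ}` the integrand splits into a radial factor times `e^{i(m-n)θ}`.
The angular integral over `(-π, π)` vanishes for `m ≠ n` and equals `2π` for `m = n`, and the
radial moment is a Gamma integral, `∫₀^∞ r^{2s-1} e^{-r²/ω} dr = ω^s Γ(s) / 2` with
`s = γ + n`.
-/

open MeasureTheory Real Set

theorem integral_exp_int_mul_mul_I_Ioo (k : ℤ) :
    ∫ θ in Ioo (-π) π, Complex.exp (k * θ * Complex.I)
      = if k = 0 then ((2 * π : ℝ) : ℂ) else 0 := by
  split_ifs with hk
  · simp [hk, two_mul, pi_pos.le]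
  have hc : (k : ℂ) * Complex.I ≠ 0 := mul_ne_zero (by exact_mod_cast hk) Complex.I_ne_zero
  rw [← integral_Ioc_eq_integral_Ioo, ← intervalIntegral.integral_of_le (by linarith [pi_pos])]
  simp_rw [mul_right_comm _ _ Complex.I]
  rw [integral_exp_mul_complex hc, div_eq_zero_iff, sub_eq_zero]
  left
  calc Complex.exp (k * Complex.I * π)
      = Complex.exp (k * Complex.I * (-π : ℝ) + k * (2 * π * Complex.I)) := by
        push_cast; ring_nf
    _ = Complex.exp (k * Complex.I * (-π : ℝ)) := by
      rw [Complex.exp_add, Complex.exp_int_mul_two_pi_mul_I, mul_one]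

theorem polarCoord_symm_pow_mul_conj_pow (p : ℝ × ℝ) (m n : ℕ) :
    Complex.polarCoord.symm p ^ m * (starRingEnd ℂ) (Complex.polarCoord.symm p) ^ n
      = ((p.1 ^ (m + n) : ℝ) : ℂ) * Complex.exp ((m - n : ℤ) * p.2 * Complex.I) := by
  rw [Complex.polarCoord_symm_apply, Complex.ofReal_cos, Complex.ofReal_sin, ← Complex.exp_mul_I]
  simp only [map_mul, Complex.conj_ofReal, ← Complex.exp_conj, Complex.conj_I, mul_pow,
    ← Complex.exp_nat_mul]
  push_cast
  rw [pow_add, show ((m : ℂ) - n) * p.2 * Complex.I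
      = m * (p.2 * Complex.I) + n * (p.2 * -Complex.I) by ring, Complex.exp_add]
  ring

theorem integral_pow_mul_conj_pow_mul_radial (g : ℝ → ℝ) (m n : ℕ) :
    ∫ z : ℂ, z ^ m * (starRingEnd ℂ) z ^ n * (g ‖z‖ : ℂ)
      = ((∫ r in Ioi 0, r ^ (m + n + 1) * g r : ℝ) : ℂ) *
          ∫ θ in Ioo (-π) π, Complex.exp ((m - n : ℤ) * θ * Complex.I) := by
  rw [← Complex.integral_comp_polarCoord_symm, polarCoord_target, ← integral_complex_ofReal,
    ← setIntegral_prod_mul, ← Measure.volume_eq_prod]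
  refine setIntegral_congr_fun (measurableSet_Ioi.prod measurableSet_Ioo) fun p ⟨hr, _⟩ => ?_
  rw [Complex.norm_polarCoord_symm, abs_of_pos hr, polarCoord_symm_pow_mul_conj_pow,
    Complex.real_smul]
  push_cast
  ring

theorem integral_rpow_mul_exp_neg_sq_div {s ω : ℝ} (hs : 0 < s) (hω : 0 < ω) :
    ∫ r in Ioi (0 : ℝ), r ^ (2 * s - 1) * exp (-r ^ 2 / ω) = ω ^ s * Gamma s / 2 := by
  have hq : (-1 : ℝ) < 2 * s - 1 := by linarith
  calc ∫ r in Ioi (0 : ℝ), r ^ (2 * s - 1) * exp (-r ^ 2 / ω)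
      = ∫ r in Ioi (0 : ℝ), r ^ (2 * s - 1) * exp (-ω⁻¹ * r ^ (2 : ℝ)) := by
        simp_rw [rpow_two, neg_div, div_eq_inv_mul, neg_mul]
    _ = ω ^ s * Gamma s / 2 := by
        rw [integral_rpow_mul_exp_neg_mul_rpow two_pos hq (inv_pos.mpr hω),
          show (2 * s - 1 + 1) / 2 = s by ring, show -(2 * s - 1 + 1) / 2 = -s by ring,
          inv_rpow hω.le, rpow_neg hω.le, inv_inv]
        ring

theorem integral_pow_mul_gammaWeight {ω γ : ℝ} (hω : 0 < ω) (hγ : 0 < γ) (n : ℕ) :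
    ∫ r in Ioi (0 : ℝ), r ^ (n + n + 1) *
        (r ^ (2 * (γ - 1)) / (Gamma γ * ω ^ γ) * exp (-r ^ 2 / ω))
      = ω ^ n * (Gamma (γ + n) / Gamma γ) / 2 := by
  have hC : 0 < Gamma γ * ω ^ γ := mul_pos (Gamma_pos_of_pos hγ) (rpow_pos_of_pos hω γ)
  calc ∫ r in Ioi (0 : ℝ), r ^ (n + n + 1) *
          (r ^ (2 * (γ - 1)) / (Gamma γ * ω ^ γ) * exp (-r ^ 2 / ω))
      = ∫ r in Ioi (0 : ℝ), (Gamma γ * ω ^ γ)⁻¹ *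
          (r ^ (2 * (γ + n) - 1) * exp (-r ^ 2 / ω)) := by
        refine setIntegral_congr_fun measurableSet_Ioi fun r (hr : 0 < r) => ?_
        rw [show 2 * (γ + n) - 1 = ((n + n + 1 : ℕ) : ℝ) + 2 * (γ - 1) by push_cast; ring,
          rpow_add hr, rpow_natCast]
        field_simp
    _ = ω ^ n * (Gamma (γ + n) / Gamma γ) / 2 := by
        rw [integral_const_mul, integral_rpow_mul_exp_neg_sq_div (by positivity) hω,
          rpow_add hω, rpow_natCast]
        field_simp

/-- Matrix-element form of the resolution of the identity for `γ`-deformed coherent states: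
`(1/π) ∫_ℂ zᵐ z̄ⁿ |z|^(2(γ-1))/(Γ(γ) ω^γ) exp(-|z|²/ω) dA(z)` equals `ωⁿ Γ(γ+n)/Γ(γ)`
if `m = n` and `0` otherwise. -/
theorem gamma_deformed_CS_resolution_of_identity (ω γ : ℝ) (hω : 0 < ω) (hγ : 0 < γ)
    (m n : ℕ) :
    (1 / (Real.pi : ℂ)) * ∫ z : ℂ,
        z ^ m * (starRingEnd ℂ z) ^ n *
          (((‖z‖) ^ (2 * (γ - 1)) / (Real.Gamma γ * ω ^ γ) *
              Real.exp (-(‖z‖) ^ 2 / ω) : ℝ) : ℂ)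
      = if m = n then ((ω ^ n * (Real.Gamma (γ + n) / Real.Gamma γ) : ℝ) : ℂ) else 0 := by
  rw [integral_pow_mul_conj_pow_mul_radial
      (fun r => r ^ (2 * (γ - 1)) / (Gamma γ * ω ^ γ) * exp (-r ^ 2 / ω)),
    integral_exp_int_mul_mul_I_Ioo]
  simp only [sub_eq_zero, Nat.cast_inj]
  split_ifs with hmn
  · subst hmn
    rw [integral_pow_mul_gammaWeight hω hγ]
    push_cast
    field_simp
  · rw [mul_zero, mul_zero]
end

section
/- For all reals x ≥ 0, y ≥ 0, all reals κ₁₃ ≥ 0, κ₂₃ ≥ 0, κ₂₁ ≥ 0, and every m ∈ ℕ, the double sequence (n₁, n₂) ↦ x^{n₁} · y^{n₂} / (Γ(1 + κ₁₃·m + n₁) · Γ(1 + κ₂₃·m + κ₂₁·n₁ + n₂)) is summable over ℕ × ℕ. (This is the everywhere-convergence of the normalization series of the (γ₁₃, γ₂)-deformed vector coherent states with dependent sums.) -/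
/-!
Since `Γ` increases on `[2, ∞)`, `n! ≤ (1 + a) Γ(1 + a + n)` for `a ≥ 0`, so each Gamma factor is
dominated by a factorial. The coupling `κ₂₁ n₁` in the second factor then costs at most a factor
`2 ^ n₁`, and the series is dominated by the product of the exponential series at `2x` and at `y`.
-/

open Nat

namespace Real

theorem succ_factorial_le_mul_Gamma {s : ℝ} {n : ℕ} (hs : n + 1 ≤ s) :
    ((n + 1)! : ℝ) ≤ s * Gamma s := by
  have hn : (0 : ℝ) ≤ n := n.cast_nonneg
  rw [← Gamma_add_one (by linarith), ← Gamma_nat_eq_factorial]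
  exact Gamma_strictMonoOn_Ici.monotoneOn (by simp; linarith) (by simp; linarith)
    (by push_cast; linarith)

theorem factorial_le_mul_Gamma_one_add_add {a : ℝ} (ha : 0 ≤ a) (n : ℕ) :
    (n ! : ℝ) ≤ (1 + a) * Gamma (1 + a + n) := by
  have hfac : ((n + 1)! : ℝ) ≤ (1 + a + n) * Gamma (1 + a + n) :=
    succ_factorial_le_mul_Gamma (by linarith)
  have hsplit : (1 + a + n) * Gamma (1 + a + n) ≤ (n + 1) * ((1 + a) * Gamma (1 + a + n)) := by
    have : 0 ≤ a * n * Gamma (1 + a + n) := by positivity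
    nlinarith
  rw [factorial_succ, cast_mul, cast_succ] at hfac
  exact le_of_mul_le_mul_left (hfac.trans hsplit) (by positivity)

theorem pow_div_Gamma_one_add_add_le {z a : ℝ} (hz : 0 ≤ z) (ha : 0 ≤ a) (n : ℕ) :
    z ^ n / Gamma (1 + a + n) ≤ (1 + a) * (z ^ n / n !) := by
  rw [mul_div_assoc', div_le_div_iff₀ (by positivity) (by positivity), mul_comm (1 + a), mul_assoc]
  exact mul_le_mul_of_nonneg_left (factorial_le_mul_Gamma_one_add_add ha n) (by positivity)

end Real

theorem add_add_mul_le_mul_two_pow {b κ : ℝ} (hb : 0 ≤ b) (hκ : 0 ≤ κ) (n : ℕ) :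
    1 + b + κ * n ≤ (1 + b + κ) * 2 ^ n := by
  have hn : (n : ℝ) + 1 ≤ 2 ^ n := by exact_mod_cast n.lt_two_pow_self
  calc 1 + b + κ * n ≤ (1 + b + κ) * (n + 1) := by nlinarith [(n.cast_nonneg : (0 : ℝ) ≤ n)]
    _ ≤ (1 + b + κ) * 2 ^ n := by gcongr

theorem pow_mul_pow_div_Gamma_mul_Gamma_le {x y a b κ : ℝ} (hx : 0 ≤ x) (hy : 0 ≤ y)
    (ha : 0 ≤ a) (hb : 0 ≤ b) (hκ : 0 ≤ κ) (n₁ n₂ : ℕ) :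
    x ^ n₁ * y ^ n₂ / (Real.Gamma (1 + a + n₁) * Real.Gamma (1 + b + κ * n₁ + n₂)) ≤
      (1 + a) * (1 + b + κ) * ((2 * x) ^ n₁ / n₁ ! * (y ^ n₂ / n₂ !)) := by
  have h₁ := Real.pow_div_Gamma_one_add_add_le hx ha n₁
  have h₂ := Real.pow_div_Gamma_one_add_add_le hy (by positivity : 0 ≤ b + κ * n₁) n₂
  have hκn := add_add_mul_le_mul_two_pow hb hκ n₁
  rw [← add_assoc] at h₂
  calc x ^ n₁ * y ^ n₂ / (Real.Gamma (1 + a + n₁) * Real.Gamma (1 + b + κ * n₁ + n₂))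
      = x ^ n₁ / Real.Gamma (1 + a + n₁) * (y ^ n₂ / Real.Gamma (1 + b + κ * n₁ + n₂)) :=
        mul_div_mul_comm _ _ _ _
    _ ≤ (1 + a) * (x ^ n₁ / n₁ !) * ((1 + b + κ * n₁) * (y ^ n₂ / n₂ !)) := by
        gcongr
    _ ≤ (1 + a) * (x ^ n₁ / n₁ !) * ((1 + b + κ) * 2 ^ n₁ * (y ^ n₂ / n₂ !)) := by
        gcongr
    _ = (1 + a) * (1 + b + κ) * ((2 * x) ^ n₁ / n₁ ! * (y ^ n₂ / n₂ !)) := by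
        rw [mul_pow]; ring

/-- Everywhere-convergence of the normalization series of the `(γ₁₃, γ₂)`-deformed
vector coherent states with dependent sums. -/
theorem norm_series_summable_gamma13_gamma2 (x y κ₁₃ κ₂₃ κ₂₁ : ℝ)
    (hx : 0 ≤ x) (hy : 0 ≤ y)
    (h13 : 0 ≤ κ₁₃) (h23 : 0 ≤ κ₂₃) (h21 : 0 ≤ κ₂₁) (m : ℕ) :
    Summable fun p : ℕ × ℕ =>
      x ^ p.1 * y ^ p.2 /
        (Real.Gamma (1 + κ₁₃ * m + p.1) *
          Real.Gamma (1 + κ₂₃ * m + κ₂₁ * p.1 + p.2)) := by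
  have hexp : Summable fun p : ℕ × ℕ => (2 * x) ^ p.1 / p.1 ! * (y ^ p.2 / p.2 !) :=
    (Real.summable_pow_div_factorial _).mul_of_nonneg (Real.summable_pow_div_factorial y)
      (fun _ => by positivity) (fun _ => by positivity)
  refine (hexp.mul_left ((1 + κ₁₃ * m) * (1 + κ₂₃ * m + κ₂₁))).of_nonneg_of_le
    (fun _ => by positivity) fun p => ?_
  exact pow_mul_pow_div_Gamma_mul_Gamma_le hx hy (by positivity) (by positivity) h21 p.1 p.2
end

section
/- For all reals x ≥ 0, y ≥ 0, all reals κ₁₂ ≥ 0, κ₁₃ ≥ 0, every real κ₃₂ > 0, and every m ∈ ℕ, the double sequence (n₁, n₂) ↦ x^{n₁} · y^{n₂} / (Γ(1 + κ₁₂·n₂ + κ₁₃·m + n₁) · Γ(1 + κ₃₂·n₂ + m)) is summable over ℕ × ℕ. (This is the convergence of the normalization series of the (γ₁, γ₃₂)-deformed vector coherent states.) -/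
/-!
Both Gamma factors are compared with factorials via `⌊s⌋! ≤ 2 Γ(1 + s)`. In the first one the
argument is at least `n₁`, so the `n₁`-series is dominated by `2 xⁿ/n!`. In the second one the
argument grows linearly in `n₂`, so `Γ` eventually beats every exponential and the `n₂`-series is
dominated by a geometric series. The double series is then bounded by a product of two summable
series.
-/

open Filter Topology Nat Real

namespace Real

theorem factorial_floor_le_two_mul_Gamma_one_add {s : ℝ} (hs : 0 ≤ s) :
    (⌊s⌋₊ ! : ℝ) ≤ 2 * Gamma (1 + s) := by
  set k := ⌊s⌋₊
  have hks : (k : ℝ) ≤ s := Nat.floor_le hs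
  have hsk : s < k + 1 := Nat.lt_floor_add_one s
  -- `(1 + s) Γ(1 + s) = Γ(2 + s) ≥ Γ(k + 2) = (k + 1) k!` and `1 + s ≤ 2 (k + 1)`
  have hmono : ((k + 1 : ℕ) ! : ℝ) ≤ (1 + s) * Gamma (1 + s) := by
    rw [← Gamma_add_one (by positivity), ← Gamma_nat_eq_factorial]
    refine Gamma_strictMonoOn_Ici.monotoneOn ?_ ?_ (by push_cast; linarith) <;>
      rw [Set.mem_Ici] <;> push_cast <;> linarith [k.cast_nonneg (α := ℝ)]
  rw [Nat.factorial_succ, Nat.cast_mul] at hmono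
  have hΓ : 0 ≤ Gamma (1 + s) := by positivity
  have hk : (1 + s) * Gamma (1 + s) ≤ (k + 1 : ℕ) * (2 * Gamma (1 + s)) := by
    push_cast; nlinarith
  exact le_of_mul_le_mul_left (hmono.trans hk) (by positivity)

theorem factorial_le_two_mul_Gamma_one_add {n : ℕ} {s : ℝ} (hns : (n : ℝ) ≤ s) :
    (n ! : ℝ) ≤ 2 * Gamma (1 + s) :=
  calc (n ! : ℝ) ≤ ⌊s⌋₊ ! := by gcongr; exact Nat.le_floor hns
    _ ≤ 2 * Gamma (1 + s) := factorial_floor_le_two_mul_Gamma_one_add ((n.cast_nonneg).trans hns)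

theorem tendsto_exp_mul_div_Gamma_atTop (c : ℝ) :
    Tendsto (fun s => exp (c * s) / Gamma s) atTop (𝓝 0) := by
  set r := exp |c|
  have hk : Tendsto (fun s : ℝ => ⌊s - 1⌋₊) atTop atTop :=
    tendsto_nat_floor_atTop.comp (tendsto_atTop_add_const_right _ (-1) tendsto_id)
  have hbound : Tendsto (fun s : ℝ => 2 * r ^ 2 * (r ^ ⌊s - 1⌋₊ / ⌊s - 1⌋₊ !)) atTop (𝓝 0) := by
    simpa using ((FloorSemiring.tendsto_pow_div_factorial_atTop r).comp hk).const_mul (2 * r ^ 2)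
  refine tendsto_of_tendsto_of_tendsto_of_le_of_le' tendsto_const_nhds hbound ?_ ?_
  · filter_upwards [eventually_gt_atTop 0] with s hs
    have := Gamma_pos_of_pos hs
    positivity
  · filter_upwards [eventually_ge_atTop 1] with s hs
    set k := ⌊s - 1⌋₊
    have hfac : (k ! : ℝ) / 2 ≤ Gamma s := by
      have := factorial_floor_le_two_mul_Gamma_one_add (s := s - 1) (by linarith)
      rw [add_sub_cancel] at this
      linarith
    have hexp : exp (c * s) ≤ r ^ 2 * r ^ k := by
      rw [← pow_add, ← exp_nat_mul, exp_le_exp]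
      have : s - 1 < k + 1 := Nat.lt_floor_add_one _
      push_cast
      nlinarith [le_abs_self c, abs_nonneg c]
    calc exp (c * s) / Gamma s ≤ r ^ 2 * r ^ k / (k ! / 2) := by gcongr
    _ = 2 * r ^ 2 * (r ^ k / k !) := by ring

theorem summable_pow_div_Gamma_mul_add (y : ℝ) {κ : ℝ} (hκ : 0 < κ) (b : ℝ) :
    Summable fun n : ℕ => y ^ n / Gamma (κ * n + b) := by
  set c := log (|y| + 1) / κ
  have hcκ : exp (c * κ) = |y| + 1 := by
    rw [div_mul_cancel₀ _ hκ.ne', exp_log (by positivity)]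
  have hlim : Tendsto (fun n : ℕ => exp (c * (κ * n + b)) / Gamma (κ * n + b)) atTop (𝓝 0) :=
    (tendsto_exp_mul_div_Gamma_atTop c).comp <| tendsto_atTop_add_const_right _ b <|
      (tendsto_natCast_atTop_atTop.const_mul_atTop hκ)
  have hgeom : Summable fun n : ℕ => exp (-(c * b)) * (y / (|y| + 1)) ^ n := by
    refine (summable_geometric_of_abs_lt_one ?_).mul_left _
    rw [abs_div, abs_of_pos (by positivity : 0 < |y| + 1), div_lt_one (by positivity)]
    linarith
  refine summable_of_isBigO_nat hgeom ?_
  have hsplit : (fun n : ℕ => y ^ n / Gamma (κ * n + b)) = fun n : ℕ =>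
      exp (-(c * b)) * (y / (|y| + 1)) ^ n * (exp (c * (κ * n + b)) / Gamma (κ * n + b)) := by
    funext n
    rw [show c * (κ * n + b) = n * (c * κ) + c * b by ring, exp_add, exp_nat_mul, hcκ, exp_neg]
    field_simp
    rw [← mul_pow, div_mul_cancel₀ _ (by positivity)]
  rw [hsplit]
  simpa using (Asymptotics.isBigO_refl _ atTop).mul (hlim.isBigO_one ℝ)

end Real

/-- Convergence of the normalization series of the `(γ₁, γ₃₂)`-deformed
vector coherent states. -/
theorem norm_series_summable_gamma1_gamma32 (x y κ₁₂ κ₁₃ κ₃₂ : ℝ)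
    (hx : 0 ≤ x) (hy : 0 ≤ y)
    (h12 : 0 ≤ κ₁₂) (h13 : 0 ≤ κ₁₃) (h32 : 0 < κ₃₂) (m : ℕ) :
    Summable fun p : ℕ × ℕ =>
      x ^ p.1 * y ^ p.2 /
        (Real.Gamma (1 + κ₁₂ * p.2 + κ₁₃ * m + p.1) *
          Real.Gamma (1 + κ₃₂ * p.2 + m)) := by
  have hG₂ : Summable fun n : ℕ => y ^ n / Gamma (1 + κ₃₂ * n + m) := by
    simpa only [add_comm, add_left_comm] using summable_pow_div_Gamma_mul_add y h32 (1 + m)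
  have hprod := ((summable_pow_div_factorial x).mul_left 2).mul_of_nonneg hG₂
    (fun n => by positivity) (fun n => by positivity)
  refine hprod.of_nonneg_of_le (fun p => by positivity) fun p => ?_
  have hfac : (p.1 ! : ℝ) / 2 ≤ Gamma (1 + κ₁₂ * p.2 + κ₁₃ * m + p.1) := by
    have := factorial_le_two_mul_Gamma_one_add (n := p.1) (s := κ₁₂ * p.2 + κ₁₃ * m + p.1)
      (le_add_of_nonneg_left (by positivity))
    rw [← add_assoc, ← add_assoc] at this
    linarith
  calc x ^ p.1 * y ^ p.2 / (Gamma (1 + κ₁₂ * p.2 + κ₁₃ * m + p.1) * Gamma (1 + κ₃₂ * p.2 + m))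
      = x ^ p.1 / Gamma (1 + κ₁₂ * p.2 + κ₁₃ * m + p.1) * (y ^ p.2 / Gamma (1 + κ₃₂ * p.2 + m)) :=
        mul_div_mul_comm _ _ _ _
    _ ≤ x ^ p.1 / (p.1 ! / 2) * (y ^ p.2 / Gamma (1 + κ₃₂ * p.2 + m)) := by gcongr
    _ = 2 * (x ^ p.1 / p.1 !) * (y ^ p.2 / Gamma (1 + κ₃₂ * p.2 + m)) := by ring
end

section
/- For every real x > 0, every real κ₁₂ > 0, every real κ₁₃ ≥ 0, and every m ∈ ℕ, the double sequence (n₁, n₂) ↦ x^{n₁ + κ₁₂·n₂ + κ₁₃·m} / Γ(1 + κ₁₂·n₂ + κ₁₃·m + n₁) is summable over ℕ × ℕ, where the power with real exponent is the real power of x. (This is the convergence of the normalization series of the (γ₁, 1)-deformed vector coherent state in which the second Gamma factor is an ordinary factorial.) -/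
/-!
Restricting Euler's integral to `t ≥ y` and bounding `t ^ a ≥ y ^ a` there gives
`y ^ a e^{-y} ≤ Γ(1 + a)` for `a ≥ 0`. Taking `y = x / r` shows that `x ^ a / Γ(1 + a)` is at most
`e^{x/r} r ^ a` for every `r > 0`; with `r = 1/2` the double series is dominated by the product of
the geometric series in `1/2` and in `(1/2) ^ κ₁₂`.
-/

open Real MeasureTheory Set

lemma rpow_mul_exp_neg_le_Gamma_add_one {y a : ℝ} (hy : 0 ≤ y) (ha : 0 ≤ a) :
    y ^ a * exp (-y) ≤ Gamma (a + 1) := by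
  have hs : 0 < a + 1 := by linarith
  rw [Gamma_eq_integral hs]
  calc y ^ a * exp (-y) = ∫ t in Ioi y, y ^ a * exp (-t) := by
        rw [integral_const_mul, integral_exp_neg_Ioi]
    _ ≤ ∫ t in Ioi y, exp (-t) * t ^ (a + 1 - 1) := by
        refine setIntegral_mono_on ((integrableOn_exp_neg_Ioi y).const_mul _)
          ((GammaIntegral_convergent hs).mono_set (Ioi_subset_Ioi hy)) measurableSet_Ioi
          fun t ht => ?_
        rw [add_sub_cancel_right, mul_comm]
        gcongr
        exact (mem_Ioi.mp ht).le
    _ ≤ ∫ t in Ioi 0, exp (-t) * t ^ (a + 1 - 1) :=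
        setIntegral_mono_set (GammaIntegral_convergent hs)
          (ae_restrict_of_forall_mem measurableSet_Ioi fun t ht => by
            have : 0 < t := ht
            positivity)
          (Ioi_subset_Ioi hy).eventuallyLE

lemma rpow_div_Gamma_one_add_le {x a r : ℝ} (hx : 0 ≤ x) (ha : 0 ≤ a) (hr : 0 < r) :
    x ^ a / Gamma (1 + a) ≤ exp (x / r) * r ^ a := by
  have hΓ : 0 < Gamma (1 + a) := Gamma_pos_of_pos (by linarith)
  have key := rpow_mul_exp_neg_le_Gamma_add_one (div_nonneg hx hr.le) ha
  rw [div_rpow hx hr.le, add_comm] at key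
  rw [div_le_iff₀ hΓ]
  calc x ^ a = exp (x / r) * r ^ a * (x ^ a / r ^ a * exp (-(x / r))) := by
        rw [exp_neg]
        field_simp
    _ ≤ exp (x / r) * r ^ a * Gamma (1 + a) := by gcongr

/-- Convergence of the normalization series of the `(γ₁, 1)`-deformed vector coherent
state in which the second Gamma factor is an ordinary factorial. -/
theorem norm_series_summable_gamma1_one (x κ₁₂ κ₁₃ : ℝ)
    (hx : 0 < x) (h12 : 0 < κ₁₂) (h13 : 0 ≤ κ₁₃) (m : ℕ) :
    Summable fun p : ℕ × ℕ =>
      x ^ ((p.1 : ℝ) + κ₁₂ * p.2 + κ₁₃ * m) /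
        Real.Gamma (1 + κ₁₂ * p.2 + κ₁₃ * m + p.1) := by
  set c : ℝ := κ₁₃ * m
  have hq : (1 / 2 : ℝ) ^ κ₁₂ < 1 := rpow_lt_one (by norm_num) (by norm_num) h12
  have hgeom : Summable fun p : ℕ × ℕ => (1 / 2 : ℝ) ^ p.1 * ((1 / 2 : ℝ) ^ κ₁₂) ^ p.2 :=
    summable_geometric_two.mul_of_nonneg (summable_geometric_of_lt_one (by positivity) hq)
      (fun _ => by positivity) (fun _ => by positivity)
  refine (hgeom.mul_left (exp (x / (1 / 2)) * (1 / 2) ^ c)).of_nonneg_of_le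
    (fun p => div_nonneg (by positivity) (Gamma_nonneg_of_nonneg (by positivity))) fun p => ?_
  have hexp : (0 : ℝ) ≤ p.1 + κ₁₂ * p.2 + c := by positivity
  calc x ^ ((p.1 : ℝ) + κ₁₂ * p.2 + c) / Gamma (1 + κ₁₂ * p.2 + c + p.1)
      = x ^ ((p.1 : ℝ) + κ₁₂ * p.2 + c) / Gamma (1 + (p.1 + κ₁₂ * p.2 + c)) := by ring_nf
    _ ≤ exp (x / (1 / 2)) * (1 / 2) ^ ((p.1 : ℝ) + κ₁₂ * p.2 + c) :=
        rpow_div_Gamma_one_add_le hx.le hexp (by norm_num)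
    _ = exp (x / (1 / 2)) * (1 / 2) ^ c * ((1 / 2) ^ p.1 * ((1 / 2) ^ κ₁₂) ^ p.2) := by
        rw [rpow_add (by norm_num), rpow_add (by norm_num), rpow_natCast,
          rpow_mul_natCast (by norm_num : (0 : ℝ) ≤ 1 / 2) κ₁₂ p.2]
        ring
end

section
/- For all reals x ≥ 0, y ≥ 0, all reals κ₁₂ ≥ 0, κ₃₁ ≥ 0, every real κ₃₂ > 0, and every m ∈ ℕ, the double sequence (n₁, n₂) ↦ x^{n₁} · y^{n₂} / (Γ(1 + κ₁₂·n₂ + n₁) · Γ(1 + κ₃₁·n₁ + κ₃₂·n₂ + m)) is summable over ℕ × ℕ. (This is the convergence of the normalization series of the (γ₁₂, γ₃)-deformed vector coherent states.) -/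
/-!
Restricting the Gamma integral to `(c, ∞)` gives `c ^ t * exp (-c) ≤ Γ (t + 1)`. Take `c ≥ 1`
with `x < c` and `y < c ^ κ₃₂`; since `t ↦ c ^ t` is monotone, the `(n₁, n₂)` term is at most
`exp c ^ 2 * (x / c) ^ n₁ * (y / c ^ κ₃₂) ^ n₂`, a product of two convergent geometric series.
-/

open Real Set MeasureTheory Filter

theorem Real.rpow_mul_exp_neg_le_Gamma_add_one {c t : ℝ} (hc : 0 ≤ c) (ht : 0 ≤ t) :
    c ^ t * exp (-c) ≤ Gamma (t + 1) := by
  have hint : IntegrableOn (fun x : ℝ => exp (-x) * x ^ t) (Ioi 0) := by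
    simpa using GammaIntegral_convergent (s := t + 1) (by linarith)
  calc c ^ t * exp (-c) = ∫ x in Ioi c, c ^ t * exp (-x) := by
        rw [integral_const_mul, integral_exp_neg_Ioi]
    _ ≤ ∫ x in Ioi c, exp (-x) * x ^ t := by
        refine setIntegral_mono_on ((integrableOn_exp_neg_Ioi c).const_mul _)
          (hint.mono_set (Ioi_subset_Ioi hc)) measurableSet_Ioi fun x hx => ?_
        rw [mul_comm]
        gcongr
        exact (mem_Ioi.mp hx).le
    _ ≤ ∫ x in Ioi 0, exp (-x) * x ^ t :=
        setIntegral_mono_set hint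
          (ae_restrict_of_forall_mem measurableSet_Ioi fun x (hx : 0 < x) => by positivity)
          (Ioi_subset_Ioi hc).eventuallyLE
    _ = Gamma (t + 1) := by rw [Gamma_eq_integral (by linarith), add_sub_cancel_right]

theorem Real.div_Gamma_one_add_le_exp_mul_div_rpow {a c s t : ℝ} (ha : 0 ≤ a) (hc : 1 ≤ c)
    (hs : 0 ≤ s) (hst : s ≤ t) : a / Gamma (1 + t) ≤ exp c * (a / c ^ s) := by
  have hΓ : c ^ s * exp (-c) ≤ Gamma (1 + t) := by
    rw [add_comm]
    exact (mul_le_mul_of_nonneg_right (rpow_le_rpow_of_exponent_le hc hst) (exp_pos _).le).trans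
      (rpow_mul_exp_neg_le_Gamma_add_one (by linarith) (hs.trans hst))
  calc a / Gamma (1 + t) ≤ a / (c ^ s * exp (-c)) :=
        div_le_div_of_nonneg_left ha (by positivity) hΓ
    _ = exp c * (a / c ^ s) := by rw [exp_neg]; field_simp

/-- Convergence of the normalization series of the `(γ₁₂, γ₃)`-deformed
vector coherent states. -/
theorem norm_series_summable_gamma12_gamma3 (x y κ₁₂ κ₃₁ κ₃₂ : ℝ)
    (hx : 0 ≤ x) (hy : 0 ≤ y)
    (h12 : 0 ≤ κ₁₂) (h31 : 0 ≤ κ₃₁) (h32 : 0 < κ₃₂) (m : ℕ) :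
    Summable fun p : ℕ × ℕ =>
      x ^ p.1 * y ^ p.2 /
        (Real.Gamma (1 + κ₁₂ * p.2 + p.1) *
          Real.Gamma (1 + κ₃₁ * p.1 + κ₃₂ * p.2 + m)) := by
  obtain ⟨c, hc, hxc, hyc⟩ : ∃ c : ℝ, 1 ≤ c ∧ x < c ∧ y < c ^ κ₃₂ :=
    ((eventually_ge_atTop 1).and ((eventually_gt_atTop x).and
      ((tendsto_rpow_atTop h32).eventually_gt_atTop y))).exists
  have hc₀ : 0 < c := by linarith
  have hgeom : Summable fun p : ℕ × ℕ =>
      exp c * exp c * ((x / c) ^ p.1 * (y / c ^ κ₃₂) ^ p.2) :=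
    ((summable_geometric_of_lt_one (by positivity) ((div_lt_one hc₀).2 hxc)).mul_of_nonneg
      (summable_geometric_of_lt_one (by positivity) ((div_lt_one (by positivity)).2 hyc))
      (fun _ => by positivity) fun _ => by positivity).mul_left _
  refine hgeom.of_nonneg_of_le (fun _ => by positivity) fun ⟨n₁, n₂⟩ => ?_
  have h₁ := div_Gamma_one_add_le_exp_mul_div_rpow (pow_nonneg hx n₁) hc (Nat.cast_nonneg n₁)
    (le_add_of_nonneg_left (by positivity) : (n₁ : ℝ) ≤ κ₁₂ * n₂ + n₁)
  have h₂ := div_Gamma_one_add_le_exp_mul_div_rpow (pow_nonneg hy n₂) hc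
    (by positivity : 0 ≤ κ₃₂ * n₂)
    (by nlinarith [(n₁.cast_nonneg : (0 : ℝ) ≤ n₁)] : κ₃₂ * n₂ ≤ κ₃₁ * n₁ + κ₃₂ * n₂ + m)
  rw [rpow_natCast, ← div_pow] at h₁
  rw [rpow_mul hc₀.le, rpow_natCast, ← div_pow] at h₂
  calc _ = x ^ n₁ / Gamma (1 + (κ₁₂ * n₂ + n₁)) *
        (y ^ n₂ / Gamma (1 + (κ₃₁ * n₁ + κ₃₂ * n₂ + m))) := by
        rw [mul_div_mul_comm]; ring_nf
    _ ≤ exp c * (x / c) ^ n₁ * (exp c * (y / c ^ κ₃₂) ^ n₂) :=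
        mul_le_mul h₁ h₂ (by positivity) (by positivity)
    _ = _ := by ring
end

section
/- For all reals x ≥ 0, y ≥ 0, every real κ₁₂ > 0, every real κ₃₁ ≥ 0, and every m ∈ ℕ, the double sequence (n₁, n₂) ↦ x^{n₁} · y^{n₂} / (Γ(1 + κ₁₂·n₂ + n₁) · Γ(1 + κ₃₁·n₁ + m)) is summable over ℕ × ℕ. (This is the convergence of the normalization series of the (γ₁₂, γ₃₁)-deformed vector coherent states.) -/
/-!
Since `log ∘ Γ` is convex and vanishes at `1`, `s ↦ log Γ(1 + s)` is superadditive on `[0, ∞)`, so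
`Γ(1 + n₁) Γ(1 + κ₁₂ n₂) ≤ Γ(1 + κ₁₂ n₂ + n₁)`; and `Γ` is bounded below on `(0, ∞)` by its
positive minimum. The double series is therefore dominated by a constant multiple of the product of
the series `∑ |x|ⁿ / Γ(1 + n)` and `∑ |y|ⁿ / Γ(1 + κ₁₂ n)`, which converge by the ratio test because
log-convexity also gives `Γ(t) (t - 1)^κ ≤ Γ(t + κ)`.
-/

open Real Set Filter

theorem ConvexOn.add_le_map_add_of_map_zero_nonpos {f : ℝ → ℝ} (hf : ConvexOn ℝ (Ici 0) f) (h0 : f 0 ≤ 0)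
    {a b : ℝ} (ha : 0 ≤ a) (hb : 0 ≤ b) : f a + f b ≤ f (a + b) := by
  rcases (add_nonneg ha hb).eq_or_lt with hab | hab
  · obtain ⟨rfl, rfl⟩ : a = 0 ∧ b = 0 := ⟨by linarith, by linarith⟩
    simpa using h0
  -- `a` and `b` are convex combinations of `0` and `a + b`
  have key : ∀ c, 0 ≤ c → c ≤ a + b → f c ≤ c / (a + b) * f (a + b) := fun c hc hca => by
    have hc' : 0 ≤ 1 - c / (a + b) := by rw [sub_nonneg, div_le_one hab]; exact hca
    have := hf.2 (show a + b ∈ Ici 0 by simp; linarith) (show (0 : ℝ) ∈ Ici 0 by simp)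
      (show 0 ≤ c / (a + b) by positivity) hc' (by ring)
    simp only [smul_eq_mul, mul_zero, add_zero, div_mul_cancel₀ c hab.ne'] at this
    exact this.trans (add_le_of_nonpos_right (mul_nonpos_of_nonneg_of_nonpos hc' h0))
  calc f a + f b ≤ a / (a + b) * f (a + b) + b / (a + b) * f (a + b) :=
        add_le_add (key a ha (by linarith)) (key b hb (by linarith))
    _ = f (a + b) := by field_simp

theorem Real.Gamma_one_add_mul_Gamma_one_add_le {a b : ℝ} (ha : 0 ≤ a) (hb : 0 ≤ b) :
    Gamma (1 + a) * Gamma (1 + b) ≤ Gamma (1 + (a + b)) := by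
  have hconv : ConvexOn ℝ (Ici 0) (fun s => log (Gamma (1 + s))) :=
    (convexOn_log_Gamma.translate_right 1).subset (fun s hs => by simp at hs ⊢; linarith)
      (convex_Ici 0)
  have := hconv.add_le_map_add_of_map_zero_nonpos (by simp) ha hb
  have hΓa : 0 < Gamma (1 + a) := by positivity
  have hΓb : 0 < Gamma (1 + b) := by positivity
  rwa [← log_mul hΓa.ne' hΓb.ne', log_le_log_iff (by positivity) (by positivity)] at this

theorem Real.Gamma_mul_rpow_le_Gamma_add {t κ : ℝ} (ht : 1 < t) (hκ : 0 < κ) :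
    Gamma t * (t - 1) ^ κ ≤ Gamma (t + κ) := by
  have hslope := convexOn_log_Gamma.slope_mono_adjacent (x := t - 1) (y := t) (z := t + κ)
    (by simp; linarith) (by simp; linarith) (by linarith) (by linarith)
  have ht1 : 0 < t - 1 := by linarith
  have hlog : log (Gamma t) - log (Gamma (t - 1)) = log (t - 1) := by
    rw [show t = (t - 1) + 1 by ring, Gamma_add_one ht1.ne', add_sub_cancel_right,
      log_mul ht1.ne' (Gamma_pos_of_pos ht1).ne', add_sub_cancel_right]
  simp only [Function.comp, sub_sub_cancel, div_one, add_sub_cancel_left, hlog] at hslope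
  rw [le_div_iff₀ hκ] at hslope
  have hΓt : 0 < Gamma t := Gamma_pos_of_pos (by linarith)
  rw [← log_le_log_iff (by positivity) (Gamma_pos_of_pos (by linarith)),
    log_mul hΓt.ne' (by positivity), log_rpow ht1]
  linarith

theorem Real.exists_pos_le_Gamma : ∃ c > 0, ∀ t > 0, c ≤ Gamma t := by
  obtain ⟨t₀, ht₀, hmin⟩ := exists_isMinOn_Gamma_Ioi
  exact ⟨Gamma t₀, Gamma_pos_of_pos (by linarith [ht₀.1]), fun t ht => hmin ht⟩

theorem summable_pow_div_of_eventually_mul_le {g : ℕ → ℝ} (hg : ∀ n, 0 < g n)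
    (h : ∀ C, ∀ᶠ n in atTop, C * g n ≤ g (n + 1)) (y : ℝ) :
    Summable fun n => y ^ n / g n := by
  refine summable_of_ratio_norm_eventually_le (r := 1 / 2) (by norm_num) ?_
  filter_upwards [h (2 * |y|)] with n hn
  have hgn := hg n
  have hgn1 := hg (n + 1)
  simp only [norm_div, norm_pow, Real.norm_eq_abs, abs_of_pos hgn, abs_of_pos hgn1]
  rw [div_le_iff₀ hgn1, pow_succ]
  calc |y| ^ n * |y| = 1 / 2 * (|y| ^ n / g n) * (2 * |y| * g n) := by field_simp
    _ ≤ 1 / 2 * (|y| ^ n / g n) * g (n + 1) := by gcongr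

theorem summable_pow_div_Gamma_one_add_mul {κ : ℝ} (hκ : 0 < κ) (y : ℝ) :
    Summable fun n : ℕ => y ^ n / Gamma (1 + κ * n) := by
  refine summable_pow_div_of_eventually_mul_le (fun n => by positivity) (fun C => ?_) y
  have hlin : Tendsto (fun n : ℕ => κ * n) atTop atTop :=
    tendsto_natCast_atTop_atTop.const_mul_atTop hκ
  filter_upwards [((tendsto_rpow_atTop hκ).comp hlin).eventually_ge_atTop C,
    hlin.eventually_gt_atTop 0] with n hC hn
  have := Gamma_mul_rpow_le_Gamma_add (t := 1 + κ * n) (by linarith) hκ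
  rw [add_sub_cancel_left] at this
  push_cast
  calc C * Gamma (1 + κ * n) ≤ (κ * n) ^ κ * Gamma (1 + κ * n) :=
        mul_le_mul_of_nonneg_right hC (by positivity)
    _ ≤ Gamma (1 + κ * (n + 1)) := by rw [mul_comm, mul_add_one, ← add_assoc]; exact this

theorem norm_series_summable_gamma12_gamma31_general (x y κ₁₂ κ₃₁ : ℝ)
    (h12 : 0 < κ₁₂) (h31 : 0 ≤ κ₃₁) (m : ℕ) :
    Summable fun p : ℕ × ℕ =>
      x ^ p.1 * y ^ p.2 /
        (Real.Gamma (1 + κ₁₂ * p.2 + p.1) *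
          Real.Gamma (1 + κ₃₁ * p.1 + m)) := by
  obtain ⟨c, hc, hcΓ⟩ := exists_pos_le_Gamma
  have hX : Summable fun n : ℕ => |x| ^ n / Gamma (1 + n) := by
    simpa using summable_pow_div_Gamma_one_add_mul one_pos |x|
  have hY := summable_pow_div_Gamma_one_add_mul h12 |y|
  refine .of_norm_bounded
    ((hX.mul_of_nonneg hY (fun n => by positivity) (fun n => by positivity)).div_const c)
    fun ⟨n₁, n₂⟩ => ?_
  have hsplit : Gamma (1 + n₁) * Gamma (1 + κ₁₂ * n₂) ≤ Gamma (1 + κ₁₂ * n₂ + n₁) := by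
    simpa [add_comm, add_left_comm, add_assoc] using
      Gamma_one_add_mul_Gamma_one_add_le (Nat.cast_nonneg n₁) (by positivity : 0 ≤ κ₁₂ * n₂)
  have hlow : c ≤ Gamma (1 + κ₃₁ * n₁ + m) := hcΓ _ (by positivity)
  have hΓ₁ : 0 < Gamma (1 + κ₁₂ * n₂ + n₁) := by positivity
  have hΓ₂ : 0 < Gamma (1 + κ₃₁ * n₁ + m) := by positivity
  simp only [norm_div, norm_mul, norm_pow, Real.norm_eq_abs, abs_of_pos hΓ₁, abs_of_pos hΓ₂]
  rw [div_mul_div_comm, div_div]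
  gcongr

/-- Convergence of the normalization series of the `(γ₁₂, γ₃₁)`-deformed
vector coherent states. -/
theorem norm_series_summable_gamma12_gamma31 (x y κ₁₂ κ₃₁ : ℝ)
    (hx : 0 ≤ x) (hy : 0 ≤ y)
    (h12 : 0 < κ₁₂) (h31 : 0 ≤ κ₃₁) (m : ℕ) :
    Summable fun p : ℕ × ℕ =>
      x ^ p.1 * y ^ p.2 /
        (Real.Gamma (1 + κ₁₂ * p.2 + p.1) *
          Real.Gamma (1 + κ₃₁ * p.1 + m)) :=
  norm_series_summable_gamma12_gamma31_general x y κ₁₂ κ₃₁ h12 h31 m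
end

section
/- For all reals x ≥ 0, y ≥ 0, all reals κ₁₂ ≥ 0, κ₁₃ ≥ 0, κ₂₁ ≥ 0, κ₂₃ ≥ 0, and every m ∈ ℕ, the double sequence (n₁, n₂) ↦ x^{n₁} · y^{n₂} / (Γ(1 + κ₁₂·n₂ + κ₁₃·m + n₁) · Γ(1 + κ₂₁·n₁ + κ₂₃·m + n₂)) is summable over ℕ × ℕ. (This is the everywhere-convergence of the normalization series of the (γ₁, γ₂)-doubly-deformed vector coherent states.) -/
/-! For `s ≥ 1` and every `n`, `Γ (s + n) ≥ n! / 2`, so the term at `(n₁, n₂)` is bounded in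
absolute value by `4 |x|^n₁ / n₁! · |y|^n₂ / n₂!`, the general term of the product of two
exponential series. -/

open Nat

namespace Real

/-- On `[1, 2]` use `Γ s = Γ (s + 1) / s` with `Γ (s + 1) ≥ Γ 2 = 1`; beyond `2`, `Γ` is
increasing. -/
lemma half_le_Gamma_of_one_le {s : ℝ} (hs : 1 ≤ s) : 1 / 2 ≤ Gamma s := by
  have mono := Gamma_strictMonoOn_Ici.monotoneOn
  rcases le_or_gt 2 s with h | h
  · have : Gamma 2 ≤ Gamma s := mono (by norm_num) h h
    rw [Gamma_two] at this
    linarith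
  · have hGamma_succ : Gamma 2 ≤ Gamma (s + 1) :=
      mono (by norm_num) (Set.mem_Ici.2 (by linarith)) (by linarith)
    rw [Gamma_two, Gamma_add_one (by positivity)] at hGamma_succ
    nlinarith [Gamma_pos_of_pos (show 0 < s by linarith)]

lemma factorial_le_two_mul_Gamma_add_nat {s : ℝ} (hs : 1 ≤ s) :
    ∀ n : ℕ, (n ! : ℝ) ≤ 2 * Gamma (s + n)
  | 0 => by simpa using (div_le_iff₀' two_pos).1 (half_le_Gamma_of_one_le hs)
  | n + 1 => by
    have hGamma : Gamma (n + 2) ≤ Gamma (s + (n + 1 : ℕ)) :=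
      Gamma_strictMonoOn_Ici.monotoneOn (Set.mem_Ici.2 (by linarith))
        (Set.mem_Ici.2 (by push_cast; linarith)) (by push_cast; linarith)
    have hfac : Gamma (n + 2) = (n + 1)! := by
      rw [← Gamma_nat_eq_factorial]; push_cast; ring_nf
    have hpos : 0 ≤ Gamma (s + (n + 1 : ℕ)) := Gamma_nonneg_of_nonneg (by positivity)
    linarith

lemma norm_pow_div_Gamma_add_nat_le {s : ℝ} (hs : 1 ≤ s) (x : ℝ) (n : ℕ) :
    ‖x ^ n / Gamma (s + n)‖ ≤ 2 * (‖x‖ ^ n / n !) := by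
  have hGamma : 0 < Gamma (s + n) := Gamma_pos_of_pos (by positivity)
  rw [norm_div, norm_pow, norm_of_nonneg hGamma.le]
  calc ‖x‖ ^ n / Gamma (s + n) ≤ ‖x‖ ^ n / (n ! / 2) :=
        div_le_div_of_nonneg_left (by positivity) (by positivity)
          (by linarith [factorial_le_two_mul_Gamma_add_nat hs n])
    _ = 2 * (‖x‖ ^ n / n !) := by ring

end Real

theorem norm_series_summable_gamma1_gamma2_general (x y κ₁₂ κ₁₃ κ₂₁ κ₂₃ : ℝ)
    (h12 : 0 ≤ κ₁₂) (h13 : 0 ≤ κ₁₃) (h21 : 0 ≤ κ₂₁) (h23 : 0 ≤ κ₂₃) (m : ℕ) :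
    Summable fun p : ℕ × ℕ =>
      x ^ p.1 * y ^ p.2 /
        (Real.Gamma (1 + κ₁₂ * p.2 + κ₁₃ * m + p.1) *
          Real.Gamma (1 + κ₂₁ * p.1 + κ₂₃ * m + p.2)) := by
  have hbound : Summable fun p : ℕ × ℕ =>
      (2 * (‖x‖ ^ p.1 / p.1 !)) * (2 * (‖y‖ ^ p.2 / p.2 !)) :=
    Summable.mul_of_nonneg ((Real.summable_pow_div_factorial _).mul_left 2)
      ((Real.summable_pow_div_factorial _).mul_left 2) (fun _ ↦ by positivity)
      (fun _ ↦ by positivity)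
  refine hbound.of_norm_bounded fun p ↦ ?_
  have one_le {a b : ℝ} (ha : 0 ≤ a) (hb : 0 ≤ b) : 1 ≤ 1 + a + b := by linarith
  rw [mul_div_mul_comm, norm_mul]
  exact mul_le_mul
    (Real.norm_pow_div_Gamma_add_nat_le (one_le (by positivity) (by positivity)) x p.1)
    (Real.norm_pow_div_Gamma_add_nat_le (one_le (by positivity) (by positivity)) y p.2)
    (norm_nonneg _) (by positivity)

/-- Everywhere-convergence of the normalization series of the `(γ₁, γ₂)`-doubly-deformed
vector coherent states. -/
theorem norm_series_summable_gamma1_gamma2 (x y κ₁₂ κ₁₃ κ₂₁ κ₂₃ : ℝ)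
    (hx : 0 ≤ x) (hy : 0 ≤ y)
    (h12 : 0 ≤ κ₁₂) (h13 : 0 ≤ κ₁₃) (h21 : 0 ≤ κ₂₁) (h23 : 0 ≤ κ₂₃) (m : ℕ) :
    Summable fun p : ℕ × ℕ =>
      x ^ p.1 * y ^ p.2 /
        (Real.Gamma (1 + κ₁₂ * p.2 + κ₁₃ * m + p.1) *
          Real.Gamma (1 + κ₂₁ * p.1 + κ₂₃ * m + p.2)) :=
  norm_series_summable_gamma1_gamma2_general x y κ₁₂ κ₁₃ κ₂₁ κ₂₃ h12 h13 h21 h23 m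
end

section
/- Let ω > 0, κ ≥ 0 be reals, let α > 0 and α', β, β' be reals, and let n, m ∈ ℕ. Define the density ϱ(r) = (α / ω^{α'}) · (ω^{β'} · r^{−2β})^{κ·m} · r^{2(α−1)} · exp(−r^{2α} / ω^{α'}) for r > 0. Then the generalized moment identity 2 ∫_0^∞ ϱ(r) · r^{2(α·n + β·κ·m) + 1} / ω^{α'·n + β'·κ·m} dr = n! holds. (This is the solution of the generalized moment problem for the sub-classes of first-class coherent states with one degree of freedom.) -/
open MeasureTheory Nat

/-! After the `κ m`-dependent powers of `ω` and `r` cancel, the integrand is a constant times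
`r^(2α(n+1)-1) exp(-r^(2α)/ω^α')`; the substitution `u = r^(2α)/ω^α'` turns this into a
Gamma integral, and `Γ(n+1) = n!`. -/

theorem integral_rpow_mul_exp_neg_rpow_div {p s c : ℝ} (hp : 0 < p) (hs : 0 < s) (hc : 0 < c) :
    ∫ r in Set.Ioi (0 : ℝ), r ^ (p * s - 1) * Real.exp (-(r ^ p) / c) =
      c ^ s * Real.Gamma s / p := by
  have hexp : ∀ r : ℝ, -(r ^ p) / c = -c⁻¹ * r ^ p := fun r => by ring
  have hq : -1 < p * s - 1 := by nlinarith
  have hs' : (p * s - 1 + 1) / p = s := by field_simp; ring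
  simp_rw [hexp]
  rw [integral_rpow_mul_exp_neg_mul_rpow hp hq (inv_pos.2 hc), neg_div, hs',
    Real.inv_rpow hc.le, Real.rpow_neg hc.le, inv_inv]
  ring

theorem moment_integrand_eq {ω r : ℝ} (hω : 0 < ω) (hr : 0 < r) (κ α α' β β' μ ν : ℝ) :
    ((α / ω ^ α') * (ω ^ β' * r ^ (-2 * β)) ^ (κ * μ) * r ^ (2 * (α - 1)) *
          Real.exp (-(r ^ (2 * α)) / ω ^ α')) *
        (r ^ (2 * (α * ν + β * κ * μ) + 1) / ω ^ (α' * ν + β' * κ * μ)) =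
      α / ω ^ (α' * (ν + 1)) *
        (r ^ (2 * α * (ν + 1) - 1) * Real.exp (-(r ^ (2 * α)) / ω ^ α')) := by
  have hr_pow : r ^ (2 * α * (ν + 1) - 1) =
      r ^ (-2 * β * (κ * μ)) * r ^ (2 * (α - 1)) * r ^ (2 * (α * ν + β * κ * μ) + 1) := by
    rw [← Real.rpow_add hr, ← Real.rpow_add hr]
    ring_nf
  have hω_pow : ω ^ (α' * (ν + 1)) =
      ω ^ α' * ω ^ (α' * ν + β' * κ * μ) / ω ^ (β' * (κ * μ)) := by
    rw [← Real.rpow_add hω, ← Real.rpow_sub hω]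
    ring_nf
  rw [Real.mul_rpow (Real.rpow_nonneg hω.le _) (Real.rpow_nonneg hr.le _),
    ← Real.rpow_mul hω.le, ← Real.rpow_mul hr.le, hr_pow, hω_pow]
  have := Real.rpow_pos_of_pos hω
  field_simp

theorem generalized_moment_problem_first_class_general (ω κ α α' β β' : ℝ)
    (hω : 0 < ω) (hα : 0 < α) (n m : ℕ) :
    2 * ∫ r in Set.Ioi (0 : ℝ),
        ((α / ω ^ α') * (ω ^ β' * r ^ (-2 * β)) ^ (κ * m) * r ^ (2 * (α - 1)) *
            Real.exp (-(r ^ (2 * α)) / ω ^ α')) *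
          (r ^ (2 * (α * n + β * κ * m) + 1) / ω ^ (α' * n + β' * κ * m))
      = (n ! : ℝ) := by
  rw [setIntegral_congr_fun measurableSet_Ioi
      (fun r hr => moment_integrand_eq hω hr κ α α' β β' m n),
    integral_const_mul, integral_rpow_mul_exp_neg_rpow_div (by positivity)
      (by positivity) (Real.rpow_pos_of_pos hω α'),
    ← Real.rpow_mul hω.le, Real.Gamma_nat_eq_factorial]
  have := Real.rpow_pos_of_pos hω (α' * (n + 1))
  field_simp

/-- Solution of the generalized moment problem for the sub-classes of first-class
coherent states with one degree of freedom: the density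
`ϱ(r) = (α/ω^α') (ω^β' r^(-2β))^(κm) r^(2(α-1)) exp(-r^(2α)/ω^α')` satisfies
`2 ∫₀^∞ ϱ(r) r^(2(αn+βκm)+1) / ω^(α'n+β'κm) dr = n!`. -/
theorem generalized_moment_problem_first_class (ω κ α α' β β' : ℝ)
    (hω : 0 < ω) (hκ : 0 ≤ κ) (hα : 0 < α) (n m : ℕ) :
    2 * ∫ r in Set.Ioi (0 : ℝ),
        ((α / ω ^ α') * (ω ^ β' * r ^ (-2 * β)) ^ (κ * m) * r ^ (2 * (α - 1)) *
            Real.exp (-(r ^ (2 * α)) / ω ^ α')) *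
          (r ^ (2 * (α * n + β * κ * m) + 1) / ω ^ (α' * n + β' * κ * m))
      = (n ! : ℝ) :=
  generalized_moment_problem_first_class_general ω κ α α' β β' hω hα n m
end
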